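/- In the min-max direct-search algorithm, for any unsuccessful iteration k with μ_k > ε and satisfying |μ_{D_k} − μ_k| ≤ C₁·μ_{D_k}, the stepsize satisfies α_k² ≥ 4ε²/((L_max + c)²(C₁ + 1)²). -/

import Mathlib

open scoped RealInnerProductSpace

/-- The multiobjective criticality measure
`μ(x) = - inf_{‖d‖ ≤ 1} max_{i} ⟪∇f_i(x), d⟫`. -/
noncomputable def mu {n m : ℕ} [NeZero m] (f : Fin m → EuclideanSpace ℝ (Fin n) → ℝ)
    (x : EuclideanSpace ℝ (Fin n)) : ℝ :=
  - sInf {y : ℝ | ∃ d : EuclideanSpace ℝ (Fin n), ‖d‖ ≤ 1 ∧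
      Finset.univ.sup' Finset.univ_nonempty (fun i => ⟪gradient (f i) x, d⟫) = y}

/-- The approximate criticality measure over a finite set of poll directions. -/
noncomputable def muD {n m : ℕ} [NeZero m] (f : Fin m → EuclideanSpace ℝ (Fin n) → ℝ)
    (D : Finset (EuclideanSpace ℝ (Fin n))) (hD : D.Nonempty)
    (x : EuclideanSpace ℝ (Fin n)) : ℝ :=
  - D.inf' hD (fun d =>
      Finset.univ.sup' Finset.univ_nonempty (fun i => ⟪gradient (f i) x, d⟫))

/-- The min-max objective `f(x) = max_i f_i(x)`. -/
noncomputable def fmax {n m : ℕ} [NeZero m] (f : Fin m → EuclideanSpace ℝ (Fin n) → ℝ)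
    (x : EuclideanSpace ℝ (Fin n)) : ℝ :=
  Finset.univ.sup' Finset.univ_nonempty (fun i => f i x)

/-!
Along a poll direction `d` (`‖d‖ ≤ 1`) the descent lemma for each `fᵢ` gives
`f(x + αd) ≤ f(x) + α maxᵢ ⟪∇fᵢ(x), d⟫ + L_max α²/2`; an unsuccessful poll therefore forces
`-maxᵢ ⟪∇fᵢ(x), d⟫ ≤ (L_max + c) α/2` for every `d ∈ D`, that is `μ_D ≤ (L_max + c) α/2`.
The accuracy condition gives `μ ≤ (C₁ + 1) μ_D`, and squaring `ε < μ` yields the bound.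
-/

section Descent

variable {E : Type*} [NormedAddCommGroup E] [InnerProductSpace ℝ E] [CompleteSpace E]
  {F : E → ℝ}

theorem hasDerivAt_comp_add_smul_of_differentiable (hF : Differentiable ℝ F) (x v : E) (t : ℝ) :
    HasDerivAt (fun s : ℝ => F (x + s • v)) ⟪gradient F (x + t • v), v⟫ t := by
  have hline : HasDerivAt (fun s : ℝ => x + s • v) v t := by
    simpa using ((hasDerivAt_id t).smul_const v).const_add x
  rw [inner_gradient_left]
  exact (hF _).hasFDerivAt.comp_hasDerivAt t hline

theorem image_add_le_of_lipschitzWith_gradient {L : NNReal} (hF : Differentiable ℝ F)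
    (hL : LipschitzWith L (gradient F)) (x v : E) :
    F (x + v) ≤ F x + ⟪gradient F x, v⟫ + L / 2 * ‖v‖ ^ 2 := by
  have hderiv := hasDerivAt_comp_add_smul_of_differentiable hF x v
  have hquad (t : ℝ) : HasDerivAt (fun t => F x + t * ⟪gradient F x, v⟫ + L / 2 * t ^ 2 * ‖v‖ ^ 2)
      (⟪gradient F x, v⟫ + L * t * ‖v‖ ^ 2) t := by
    refine ((((hasDerivAt_id' t).mul_const _).const_add (F x)).add
      (((hasDerivAt_pow 2 t).const_mul ((L : ℝ) / 2)).mul_const (‖v‖ ^ 2))).congr_deriv ?_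
    ring
  -- compare `t ↦ F (x + t • v)` on `[0, 1]` with its quadratic model, slope by slope
  have key := image_le_of_deriv_right_le_deriv_boundary (a := 0) (b := 1)
    (f := fun t : ℝ => F (x + t • v))
    (B := fun t => F x + t * ⟪gradient F x, v⟫ + L / 2 * t ^ 2 * ‖v‖ ^ 2)
    (B' := fun t => ⟪gradient F x, v⟫ + L * t * ‖v‖ ^ 2)
    (fun t _ => (hderiv t).continuousAt.continuousWithinAt)
    (fun t _ => (hderiv t).hasDerivWithinAt) (by simp) (by fun_prop)
    (fun t _ => (hquad t).hasDerivWithinAt)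
    (fun t ht => by
      have hdist : ‖gradient F (x + t • v) - gradient F x‖ ≤ L * (t * ‖v‖) := by
        simpa [dist_eq_norm, norm_smul, abs_of_nonneg ht.1] using hL.dist_le_mul (x + t • v) x
      calc ⟪gradient F (x + t • v), v⟫
          = ⟪gradient F x, v⟫ + ⟪gradient F (x + t • v) - gradient F x, v⟫ := by
            rw [inner_sub_left]; ring
        _ ≤ ⟪gradient F x, v⟫ + L * (t * ‖v‖) * ‖v‖ := by
            gcongr
            exact (real_inner_le_norm _ _).trans (by gcongr)
        _ = _ := by ring)
    (Set.right_mem_Icc.2 zero_le_one)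
  simpa using key

end Descent

section MinMax

variable {n m : ℕ} [NeZero m] {f : Fin m → EuclideanSpace ℝ (Fin n) → ℝ} {L : Fin m → NNReal}

theorem fmax_add_smul_le (hf : ∀ i, Differentiable ℝ (f i))
    (hL : ∀ i, LipschitzWith (L i) (gradient (f i))) (x d : EuclideanSpace ℝ (Fin n))
    {t : ℝ} (ht : 0 ≤ t) :
    fmax f (x + t • d) ≤ fmax f x
      + t * Finset.univ.sup' Finset.univ_nonempty (fun i => ⟪gradient (f i) x, d⟫)
      + ((Finset.univ.sup' Finset.univ_nonempty L : NNReal) : ℝ) / 2 * (t ^ 2 * ‖d‖ ^ 2) := by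
  refine Finset.sup'_le _ _ fun i _ => ?_
  have hfi : f i x ≤ fmax f x := Finset.le_sup' (fun j => f j x) (Finset.mem_univ i)
  have hinner : ⟪gradient (f i) x, d⟫
      ≤ Finset.univ.sup' Finset.univ_nonempty (fun j => ⟪gradient (f j) x, d⟫) :=
    Finset.le_sup' (fun j => ⟪gradient (f j) x, d⟫) (Finset.mem_univ i)
  have hLi : (L i : ℝ) ≤ ((Finset.univ.sup' Finset.univ_nonempty L : NNReal) : ℝ) :=
    NNReal.coe_le_coe.2 (Finset.le_sup' L (Finset.mem_univ i))
  calc f i (x + t • d)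
      ≤ f i x + ⟪gradient (f i) x, t • d⟫ + L i / 2 * ‖t • d‖ ^ 2 :=
        image_add_le_of_lipschitzWith_gradient (hf i) (hL i) x (t • d)
    _ = f i x + t * ⟪gradient (f i) x, d⟫ + L i / 2 * (t ^ 2 * ‖d‖ ^ 2) := by
        rw [real_inner_smul_right, norm_smul, Real.norm_of_nonneg ht, mul_pow]
    _ ≤ _ := by gcongr

theorem muD_le_of_unsuccessful (hf : ∀ i, Differentiable ℝ (f i))
    (hL : ∀ i, LipschitzWith (L i) (gradient (f i)))
    {D : Finset (EuclideanSpace ℝ (Fin n))} (hD : D.Nonempty) (hDnorm : ∀ d ∈ D, ‖d‖ ≤ 1)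
    {x : EuclideanSpace ℝ (Fin n)} {α c : ℝ} (hα : 0 < α)
    (hunsucc : ∀ d ∈ D, fmax f (x + α • d) ≥ fmax f x - c / 2 * α ^ 2) :
    muD f D hD x ≤ (((Finset.univ.sup' Finset.univ_nonempty L : NNReal) : ℝ) + c) / 2 * α := by
  rw [muD, neg_le]
  refine Finset.le_inf' _ _ fun d hd => le_of_mul_le_mul_left ?_ hα
  have hdescent := fmax_add_smul_le hf hL x d hα.le
  have hd1 : ‖d‖ ^ 2 ≤ 1 := pow_le_one₀ (norm_nonneg d) (hDnorm d hd)
  have hL0 : (0 : ℝ) ≤ ((Finset.univ.sup' Finset.univ_nonempty L : NNReal) : ℝ) :=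
    NNReal.coe_nonneg _
  have hsq := mul_le_mul_of_nonneg_left hd1 (mul_nonneg hL0 (sq_nonneg α))
  linarith [hunsucc d hd]

end MinMax

theorem stmt14 {n m : ℕ} [NeZero m] (f : Fin m → EuclideanSpace ℝ (Fin n) → ℝ)
    (L : Fin m → NNReal)
    (hf : ∀ i, ContDiff ℝ 1 (f i))
    (hLip : ∀ i, LipschitzWith (L i) (gradient (f i)))
    (D : Finset (EuclideanSpace ℝ (Fin n))) (hD : D.Nonempty)
    (hDnorm : ∀ d ∈ D, ‖d‖ ≤ 1)
    (x : EuclideanSpace ℝ (Fin n)) (α : ℝ) (hα : 0 < α)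
    (c C₁ ε : ℝ) (hc : 0 < c) (hC₁ : 0 < C₁) (hε : 0 < ε)
    (hunsucc : ∀ d ∈ D, fmax f (x + α • d) ≥ fmax f x - c / 2 * α ^ 2)
    (hmu : mu f x > ε)
    (hC : |muD f D hD x - mu f x| ≤ C₁ * muD f D hD x) :
    α ^ 2 ≥ 4 * ε ^ 2 /
      ((((Finset.univ.sup' Finset.univ_nonempty L : NNReal) : ℝ) + c) ^ 2 *
        (C₁ + 1) ^ 2) := by
  set Lmax : ℝ := ((Finset.univ.sup' Finset.univ_nonempty L : NNReal) : ℝ)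
  have hmuD : muD f D hD x ≤ (Lmax + c) / 2 * α :=
    muD_le_of_unsuccessful (fun i => (hf i).differentiable one_ne_zero) hLip hD hDnorm hα hunsucc
  have hmu_le : mu f x ≤ (C₁ + 1) * muD f D hD x := by linarith [(abs_le.1 hC).1]
  have hε_lt : ε < (C₁ + 1) * ((Lmax + c) / 2 * α) :=
    hmu.trans_le (hmu_le.trans (mul_le_mul_of_nonneg_left hmuD (by linarith)))
  rw [ge_iff_le, div_le_iff₀ (by positivity)]
  calc 4 * ε ^ 2 ≤ 4 * ((C₁ + 1) * ((Lmax + c) / 2 * α)) ^ 2 := by gcongr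
    _ = α ^ 2 * ((Lmax + c) ^ 2 * (C₁ + 1) ^ 2) := by ring
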